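/- For any semiflow φ on a compact metric space and any admissible function τ, one has ĥ_r(φ) ≤ ĥ_s(φ) ≤ h_top^τ(φ). -/

import Mathlib

open Set Filter
open scoped ENNReal NNReal Classical Real


open Set Filter

variable {α : Type*}

/-- A (not necessarily continuous) semiflow on `α`, parameterized by nonnegative real times. -/
def IsSemiflow (φ : ℝ → α → α) : Prop :=
  (∀ x, φ 0 x = x) ∧ ∀ s t : ℝ, 0 ≤ s → 0 ≤ t → ∀ x, φ (s + t) x = φ s (φ t x)

/-- A continuous semiflow. -/
def IsContSemiflow [TopologicalSpace α] (φ : ℝ → α → α) : Prop :=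
  IsSemiflow φ ∧ ContinuousOn (fun p : ℝ × α => φ p.1 p.2) (Set.Ici 0 ×ˢ Set.univ)

/-- The pseudosemimetric `d_δ^φ(x,y) = inf { d(φ_s x, φ_s y) : s ∈ [0,δ) }`. -/
noncomputable def dDelta (d : α → α → ℝ) (φ : ℝ → α → α) (δ : ℝ) (x y : α) : ℝ :=
  sInf ((fun s => d (φ s x) (φ s y)) '' Set.Ico 0 δ)

/-- The modified dynamical ball `B̂(x,φ,T,ε,δ)`. -/
def ballHat (d : α → α → ℝ) (φ : ℝ → α → α) (T ε δ : ℝ) (x : α) : Set α :=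
  {y | ∀ t ∈ Set.Icc (0:ℝ) T, dDelta d φ δ (φ t x) (φ t y) < ε}

/-- The classical Bowen dynamical ball `B(x,φ,T,ε)`. -/
def ballB (d : α → α → ℝ) (φ : ℝ → α → α) (T ε : ℝ) (x : α) : Set α :=
  {y | ∀ t ∈ Set.Icc (0:ℝ) T, d (φ t x) (φ t y) < ε}

/-- `(φ,T,ε,δ)`-separated set. -/
def sepHat (d : α → α → ℝ) (φ : ℝ → α → α) (T ε δ : ℝ) (E : Set α) : Prop :=
  ∀ x ∈ E, E ∩ ballHat d φ T ε δ x = {x}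

/-- `(φ,T,ε,δ)`-spanning set for the subset `S`. -/
def spanHat (d : α → α → ℝ) (φ : ℝ → α → α) (S : Set α) (T ε δ : ℝ) (F : Set α) : Prop :=
  F ⊆ S ∧ S ⊆ ⋃ y ∈ F, ballHat d φ T ε δ y

/-- Classical `(φ,T,ε)`-separated set. -/
def sepB (d : α → α → ℝ) (φ : ℝ → α → α) (T ε : ℝ) (E : Set α) : Prop :=
  ∀ x ∈ E, E ∩ ballB d φ T ε x = {x}

/-- Classical `(φ,T,ε)`-spanning set for the subset `S`. -/
def spanB (d : α → α → ℝ) (φ : ℝ → α → α) (S : Set α) (T ε : ℝ) (F : Set α) : Prop :=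
  F ⊆ S ∧ S ⊆ ⋃ y ∈ F, ballB d φ T ε y

/-- `ŝ(φ,T,ε,δ)`: sup of cardinalities of separated subsets of `S`. -/
noncomputable def sHat (d : α → α → ℝ) (φ : ℝ → α → α) (S : Set α) (T ε δ : ℝ) : ℕ∞ :=
  ⨆ (E : Set α) (_ : E ⊆ S ∧ sepHat d φ T ε δ E), E.encard

/-- `r̂(φ,T,ε,δ)`: inf of cardinalities of spanning sets. -/
noncomputable def rHat (d : α → α → ℝ) (φ : ℝ → α → α) (S : Set α) (T ε δ : ℝ) : ℕ∞ :=
  ⨅ (F : Set α) (_ : spanHat d φ S T ε δ F), F.encard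

noncomputable def sB (d : α → α → ℝ) (φ : ℝ → α → α) (S : Set α) (T ε : ℝ) : ℕ∞ :=
  ⨆ (E : Set α) (_ : E ⊆ S ∧ sepB d φ T ε E), E.encard

noncomputable def rB (d : α → α → ℝ) (φ : ℝ → α → α) (S : Set α) (T ε : ℝ) : ℕ∞ :=
  ⨅ (F : Set α) (_ : spanB d φ S T ε F), F.encard

/-- Extended logarithm on `ℕ∞`, with `log ∞ = ∞` and `log 0 = -∞`. -/
noncomputable def elog (x : ℕ∞) : EReal :=
  if x = ⊤ then ⊤ else if x = 0 then ⊥ else ((Real.log (x.toNat : ℝ) : ℝ) : EReal)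

/-- Exponential growth rate `limsup_{T→∞} (1/T) log f(T)`. -/
noncomputable def rate (f : ℝ → ℕ∞) : EReal :=
  Filter.limsup (fun T : ℝ => ((T⁻¹ : ℝ) : EReal) * elog (f T)) Filter.atTop

/-- The modified separated-set entropy `ĥ_s(φ)` (on the subset `S`); since the quantities are
monotone in `ε` and `δ`, the limits `ε → 0⁺`, `δ → 0⁺` are suprema. -/
noncomputable def hHatS (d : α → α → ℝ) (φ : ℝ → α → α) (S : Set α) : EReal :=
  ⨆ (δ : ℝ) (_ : 0 < δ) (ε : ℝ) (_ : 0 < ε), rate (fun T => sHat d φ S T ε δ)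

/-- The modified spanning-set entropy `ĥ_r(φ)`. -/
noncomputable def hHatR (d : α → α → ℝ) (φ : ℝ → α → α) (S : Set α) : EReal :=
  ⨆ (δ : ℝ) (_ : 0 < δ) (ε : ℝ) (_ : 0 < ε), rate (fun T => rHat d φ S T ε δ)

/-- Bowen's classical separated-set entropy `h_s(φ)`. -/
noncomputable def hSB (d : α → α → ℝ) (φ : ℝ → α → α) (S : Set α) : EReal :=
  ⨆ (ε : ℝ) (_ : 0 < ε), rate (fun T => sB d φ S T ε)

/-- Bowen's classical spanning-set entropy `h_r(φ)`. -/
noncomputable def hRB (d : α → α → ℝ) (φ : ℝ → α → α) (S : Set α) : EReal :=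
  ⨆ (ε : ℝ) (_ : 0 < ε), rate (fun T => rB d φ S T ε)

/-- An admissible function `τ` in the sense of Alves–Carvalho–Vásquez: each `x` carries a
strictly increasing sequence `(τ_n(x))_{n ∈ A(x)}` of nonnegative reals with `τ_0(x) = 0`,
where `A(x)` is a downward-closed set of indices containing `0`, together with a constant
`γ > 0` satisfying the gap and cocycle conditions. -/
structure Admissible (φ : ℝ → α → α) where
  τ : α → ℕ → ℝ
  A : α → ℕ → Prop
  A_zero : ∀ x, A x 0
  A_mono : ∀ x m n, m ≤ n → A x n → A x m
  τ_zero : ∀ x, τ x 0 = 0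
  τ_mono : ∀ x n, A x (n + 1) → τ x n < τ x (n + 1)
  γ : ℝ
  γ_pos : 0 < γ
  gap : ∀ x n, A x (n + 1) → γ ≤ τ x (n + 1) - τ x n
  coc_between : ∀ x n s, 1 ≤ n → A x (n + 1) → τ x (n - 1) < s → s < τ x n →
    τ (φ s x) 1 = τ x n - s
  coc_at : ∀ x n, 1 ≤ n → A x (n + 1) → τ (φ (τ x n) x) 1 = τ x (n + 1)

/-- The set `J^τ_{T,ρ}(x) = (0,T] \ ⋃_j (τ_j(x)-ρ, τ_j(x)+ρ)`. -/
def Jset {φ : ℝ → α → α} (a : Admissible φ) (T ρ : ℝ) (x : α) : Set ℝ :=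
  Set.Ioc 0 T \ ⋃ (j : ℕ) (_ : a.A x j), Set.Ioo (a.τ x j - ρ) (a.τ x j + ρ)

/-- The `τ`-dynamical ball `B^τ(x,φ,T,ε,ρ)`. -/
def ballTau (d : α → α → ℝ) {φ : ℝ → α → α} (a : Admissible φ) (T ε ρ : ℝ) (x : α) : Set α :=
  {y | ∀ t ∈ Jset a T ρ x, d (φ t x) (φ t y) < ε}

/-- `(φ,τ,T,ε,ρ)`-separated set. -/
def sepTau (d : α → α → ℝ) {φ : ℝ → α → α} (a : Admissible φ) (T ε ρ : ℝ) (E : Set α) : Prop :=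
  ∀ x ∈ E, E ∩ ballTau d a T ε ρ x = {x}

noncomputable def sTau (d : α → α → ℝ) {φ : ℝ → α → α} (a : Admissible φ) (T ε ρ : ℝ) : ℕ∞ :=
  ⨆ (E : Set α) (_ : sepTau d a T ε ρ E), E.encard

noncomputable def hTau (d : α → α → ℝ) {φ : ℝ → α → α} (a : Admissible φ) : EReal :=
  ⨆ (ρ : ℝ) (_ : 0 < ρ) (_ : ρ < a.γ / 2) (ε : ℝ) (_ : 0 < ε),
    rate (fun T => sTau d a T ε ρ)


section Aux

variable {X : Type*} [MetricSpace X]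

private lemma dDelta_nonneg (φ : ℝ → X → X) {δ : ℝ} (hδ : 0 < δ) (x y : X) :
    0 ≤ dDelta dist φ δ x y := by
  apply le_csInf ((Set.nonempty_Ico.2 hδ).image _)
  rintro r ⟨s, _, rfl⟩
  exact dist_nonneg

private lemma dDelta_le (φ : ℝ → X → X) {δ s : ℝ} (hs : s ∈ Set.Ico 0 δ) (x y : X) :
    dDelta dist φ δ x y ≤ dist (φ s x) (φ s y) := by
  apply csInf_le
  · exact ⟨0, by rintro r ⟨u, _, rfl⟩; exact dist_nonneg⟩
  · exact ⟨s, hs, rfl⟩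

private lemma dDelta_self (φ : ℝ → X → X) {δ : ℝ} (hδ : 0 < δ) (x : X) :
    dDelta dist φ δ x x = 0 := by
  refine le_antisymm ?_ (dDelta_nonneg φ hδ x x)
  have := dDelta_le φ ⟨le_refl (0:ℝ), hδ⟩ x x
  rwa [dist_self] at this

private lemma dDelta_comm (φ : ℝ → X → X) (δ : ℝ) (x y : X) :
    dDelta dist φ δ x y = dDelta dist φ δ y x := by
  unfold dDelta
  congr 1
  ext r
  constructor
  · rintro ⟨s, hs, rfl⟩; exact ⟨s, hs, dist_comm _ _⟩
  · rintro ⟨s, hs, rfl⟩; exact ⟨s, hs, dist_comm _ _⟩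

private lemma mem_ballHat_self (φ : ℝ → X → X) {T ε δ : ℝ} (hε : 0 < ε) (hδ : 0 < δ)
    (x : X) : x ∈ ballHat dist φ T ε δ x := by
  intro t _
  rw [dDelta_self φ hδ]
  exact hε

private lemma ballHat_comm (φ : ℝ → X → X) {T ε δ : ℝ} {x y : X}
    (h : y ∈ ballHat dist φ T ε δ x) : x ∈ ballHat dist φ T ε δ y := by
  intro t ht
  rw [dDelta_comm]
  exact h t ht

private lemma mem_ballTau_self {φ : ℝ → X → X} (a : Admissible φ) {T ε ρ : ℝ}
    (hε : 0 < ε) (x : X) : x ∈ ballTau dist a T ε ρ x := by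
  intro t _
  rw [dist_self]
  exact hε

private lemma tau_gap {φ : ℝ → X → X} (a : Admissible φ) (x : X) :
    ∀ n m : ℕ, m < n → a.A x n → a.τ x m + a.γ ≤ a.τ x n := by
  intro n
  induction n with
  | zero => intro m hm _; exact absurd hm (Nat.not_lt_zero m)
  | succ n ih =>
    intro m hm hA
    rcases Nat.lt_succ_iff_lt_or_eq.mp hm with h | rfl
    · have h1 := ih m h (a.A_mono x n (n + 1) (Nat.le_succ n) hA)
      have h2 := a.τ_mono x n hA
      linarith
    · have := a.gap x m hA
      linarith

/-- The key geometric inclusion: the `τ`-dynamical ball at time `T + δ` with radius `ρ`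
is contained in the modified dynamical ball at time `T`. -/
private lemma ballTau_subset_ballHat {φ : ℝ → X → X} (hφ : IsSemiflow φ)
    (a : Admissible φ) {T ε δ ρ : ℝ} (hT : 0 ≤ T) (hρ : 0 < ρ) (hρδ : 4 * ρ < δ)
    (hργ : 2 * ρ ≤ a.γ) (x : X) :
    ballTau dist a (T + δ) ε ρ x ⊆ ballHat dist φ T ε δ x := by
  intro y hy t ht
  obtain ⟨ht0, htT⟩ := ht
  have hδ : 0 < δ := by linarith
  obtain ⟨u, hu1, hu2, huJ⟩ :
      ∃ u, t < u ∧ u < t + δ ∧ u ∈ Jset a (T + δ) ρ x := by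
    by_cases hcase : ∀ j, a.A x j → (t + δ / 2) ∉ Set.Ioo (a.τ x j - ρ) (a.τ x j + ρ)
    · refine ⟨t + δ / 2, by linarith, by linarith, ⟨⟨by linarith, by linarith⟩, ?_⟩⟩
      intro hmem
      rw [Set.mem_iUnion₂] at hmem
      obtain ⟨j, hAj, hu⟩ := hmem
      exact hcase j hAj hu
    · push_neg at hcase
      obtain ⟨j, hAj, hj1, hj2⟩ := hcase
      refine ⟨a.τ x j + ρ, by linarith, by linarith, ⟨⟨by linarith, by linarith⟩, ?_⟩⟩
      intro hmem
      rw [Set.mem_iUnion₂] at hmem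
      obtain ⟨k, hAk, hk1, hk2⟩ := hmem
      rcases lt_trichotomy k j with h | h | h
      · have := tau_gap a x j k h hAj
        have := a.γ_pos
        linarith
      · subst h; linarith
      · have := tau_gap a x k j h hAk
        linarith
  have hdist := hy u huJ
  have hs : u - t ∈ Set.Ico (0:ℝ) δ := ⟨by linarith, by linarith⟩
  have e1 : φ (u - t) (φ t x) = φ u x := by
    rw [← hφ.2 (u - t) t (by linarith) ht0 x, sub_add_cancel]
  have e2 : φ (u - t) (φ t y) = φ u y := by
    rw [← hφ.2 (u - t) t (by linarith) ht0 y, sub_add_cancel]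
  have h3 := dDelta_le φ hs (φ t x) (φ t y)
  rw [e1, e2] at h3
  exact lt_of_le_of_lt h3 hdist

private lemma sHat_le_sTau {φ : ℝ → X → X} (hφ : IsSemiflow φ) (a : Admissible φ)
    {T ε δ ρ : ℝ} (hT : 0 ≤ T) (hε : 0 < ε) (hρ : 0 < ρ) (hρδ : 4 * ρ < δ)
    (hργ : 2 * ρ ≤ a.γ) :
    sHat dist φ Set.univ T ε δ ≤ sTau dist a (T + δ) ε ρ := by
  refine iSup_le fun E => iSup_le fun hE => ?_
  have hsep : sepTau dist a (T + δ) ε ρ E := by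
    intro x hx
    apply Set.Subset.antisymm
    · intro z hz
      have hz' : z ∈ E ∩ ballHat dist φ T ε δ x :=
        ⟨hz.1, ballTau_subset_ballHat hφ a hT hρ hρδ hργ x hz.2⟩
      rw [hE.2 x hx] at hz'
      exact hz'
    · rintro z rfl
      exact ⟨hx, mem_ballTau_self a hε _⟩
  exact le_iSup_of_le E (le_iSup_of_le hsep le_rfl)

private lemma rHat_le_sHat (φ : ℝ → X → X) {T ε δ : ℝ} (hε : 0 < ε) (hδ : 0 < δ) :
    rHat dist φ Set.univ T ε δ ≤ sHat dist φ Set.univ T ε δ := by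
  obtain ⟨E, hEmax⟩ := zorn_subset {E : Set X | sepHat dist φ T ε δ E} (by
    intro c hc hchain
    refine ⟨⋃₀ c, ?_, fun s hs => Set.subset_sUnion_of_mem hs⟩
    intro x hx
    obtain ⟨E₀, hE₀c, hxE₀⟩ := hx
    apply Set.Subset.antisymm
    · rintro z ⟨⟨F, hFc, hzF⟩, hzball⟩
      rcases hchain.total hE₀c hFc with h | h
      · have : z ∈ F ∩ ballHat dist φ T ε δ x := ⟨hzF, hzball⟩
        rw [hc hFc x (h hxE₀)] at this
        exact this
      · have : z ∈ E₀ ∩ ballHat dist φ T ε δ x := ⟨h hzF, hzball⟩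
        rw [hc hE₀c x hxE₀] at this
        exact this
    · rintro z rfl
      exact ⟨⟨E₀, hE₀c, hxE₀⟩, mem_ballHat_self φ hε hδ _⟩)
  obtain ⟨hEsep, hEmax'⟩ := hEmax
  have hspan : spanHat dist φ Set.univ T ε δ E := by
    refine ⟨Set.subset_univ E, fun x _ => ?_⟩
    by_contra hx
    rw [Set.mem_iUnion₂] at hx
    push_neg at hx
    have hxE : x ∉ E := fun h => hx x h (mem_ballHat_self φ hε hδ x)
    have hsep' : sepHat dist φ T ε δ (insert x E) := by
      intro z hz
      rcases hz with rfl | hzE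
      · apply Set.Subset.antisymm
        · rintro w ⟨hw, hwball⟩
          rcases hw with rfl | hwE
          · rfl
          · exact absurd (ballHat_comm φ hwball) (hx w hwE)
        · rintro w rfl
          exact ⟨Set.mem_insert _ _, mem_ballHat_self φ hε hδ _⟩
      · apply Set.Subset.antisymm
        · rintro w ⟨hw, hwball⟩
          rcases hw with rfl | hwE
          · exact absurd hwball (hx z hzE)
          · have : w ∈ E ∩ ballHat dist φ T ε δ z := ⟨hwE, hwball⟩
            rw [hEsep z hzE] at this
            exact this
        · rintro w rfl
          exact ⟨Set.mem_insert_of_mem x hzE, mem_ballHat_self φ hε hδ _⟩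
    have := hEmax' hsep' (Set.subset_insert x E) (Set.mem_insert x E)
    exact hxE this
  calc rHat dist φ Set.univ T ε δ ≤ E.encard := iInf_le_of_le E (iInf_le_of_le hspan le_rfl)
    _ ≤ sHat dist φ Set.univ T ε δ :=
        le_iSup_of_le E (le_iSup_of_le ⟨Set.subset_univ E, hEsep⟩ le_rfl)

private lemma elog_mono {x y : ℕ∞} (h : x ≤ y) : elog x ≤ elog y := by
  rcases eq_or_ne y ⊤ with rfl | hy
  · simp [elog]
  · have hx : x ≠ ⊤ := fun hx => hy (top_le_iff.mp (hx ▸ h))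
    rcases eq_or_ne x 0 with rfl | hx0
    · have h0 : elog 0 = ⊥ := by rw [elog]; simp
      rw [h0]; exact bot_le
    · have hy0 : y ≠ 0 := by
        rintro rfl
        exact hx0 (le_antisymm h zero_le)
      rw [elog, if_neg hx, if_neg hx0, elog, if_neg hy, if_neg hy0]
      apply EReal.coe_le_coe_iff.2
      have h1 : 0 < x.toNat := Nat.pos_of_ne_zero fun h' => by
        rcases ENat.toNat_eq_zero.mp h' with h'' | h''
        · exact hx0 h''
        · exact hx h''
      apply Real.log_le_log (by exact_mod_cast h1)
      exact_mod_cast ENat.toNat_le_toNat h hy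

private lemma elog_cases (x : ℕ∞) : elog x = ⊥ ∨ 0 ≤ elog x := by
  rcases eq_or_ne x ⊤ with rfl | hx
  · right; simp [elog]
  · rcases eq_or_ne x 0 with rfl | hx0
    · left; simp [elog]
    · right
      rw [elog, if_neg hx, if_neg hx0]
      have h1 : 0 < x.toNat := Nat.pos_of_ne_zero fun h' => by
        rcases ENat.toNat_eq_zero.mp h' with h'' | h''
        · exact hx0 h''
        · exact hx h''
      have : (0:ℝ) ≤ Real.log (x.toNat : ℝ) := Real.log_nonneg (by exact_mod_cast h1)
      exact_mod_cast this

private lemma rate_le_rate {f g : ℝ → ℕ∞} (h : ∀ᶠ T in Filter.atTop, f T ≤ g T) :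
    rate f ≤ rate g := by
  refine Filter.limsup_le_limsup ?_ (by isBoundedDefault) (by isBoundedDefault)
  filter_upwards [h, Filter.eventually_ge_atTop (0:ℝ)] with T hfg hT
  exact mul_le_mul_of_nonneg_left (elog_mono hfg)
    (by exact_mod_cast inv_nonneg.2 hT)

private lemma rate_shift (f : ℝ → ℕ∞) {δ : ℝ} (hδ : 0 ≤ δ) :
    rate (fun T => f (T + δ)) ≤ rate f := by
  rw [← EReal.le_of_forall_lt_iff_le]
  intro c hc
  obtain ⟨b, hb1, hb2⟩ := EReal.exists_between_coe_real hc
  have hbc : b < c := by exact_mod_cast hb2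
  have hev : ∀ᶠ S in Filter.atTop, ((S⁻¹ : ℝ) : EReal) * elog (f S) < (b : EReal) :=
    Filter.eventually_lt_of_limsup_lt hb1
  rw [Filter.eventually_atTop] at hev
  obtain ⟨S₀, hS₀⟩ := hev
  apply Filter.limsup_le_of_le (by isBoundedDefault)
  filter_upwards [Filter.eventually_ge_atTop (max 1 (max S₀ (δ * b / (c - b))))] with T hT
  have hT1 : (1:ℝ) ≤ T := le_trans (le_max_left _ _) hT
  have hTpos : (0:ℝ) < T := by linarith
  have hTS₀ : S₀ ≤ T := le_trans (le_trans (le_max_left _ _) (le_max_right _ _)) hT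
  have hTb : δ * b / (c - b) ≤ T :=
    le_trans (le_trans (le_max_right _ _) (le_max_right _ _)) hT
  have hcb : (0:ℝ) < c - b := by linarith
  have hTcb : δ * b ≤ T * (c - b) := by
    rw [div_le_iff₀ hcb] at hTb
    linarith
  have hu : (((T + δ)⁻¹ : ℝ) : EReal) * elog (f (T + δ)) < (b : EReal) :=
    hS₀ (T + δ) (by linarith)
  rcases elog_cases (f (T + δ)) with hE | hE
  · show ((T⁻¹ : ℝ) : EReal) * elog (f (T + δ)) ≤ (c : EReal)
    rw [hE, EReal.coe_mul_bot_of_pos (by positivity : (0:ℝ) < T⁻¹)]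
    exact bot_le
  · have hTδpos : (0:ℝ) < T + δ := by linarith
    have h1 : elog (f (T + δ)) ≤ (((T + δ) * b : ℝ) : EReal) := by
      calc elog (f (T + δ))
          = ((((T + δ) * (T + δ)⁻¹ : ℝ)) : EReal) * elog (f (T + δ)) := by
            rw [mul_inv_cancel₀ (ne_of_gt hTδpos)]
            simp
        _ = (((T + δ) : ℝ) : EReal) * ((((T + δ)⁻¹ : ℝ) : EReal) * elog (f (T + δ))) := by
            rw [EReal.coe_mul, mul_assoc]
        _ ≤ (((T + δ) : ℝ) : EReal) * (b : EReal) :=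
            mul_le_mul_of_nonneg_left hu.le (by exact_mod_cast hTδpos.le)
        _ = (((T + δ) * b : ℝ) : EReal) := (EReal.coe_mul _ _).symm
    show ((T⁻¹ : ℝ) : EReal) * elog (f (T + δ)) ≤ (c : EReal)
    calc ((T⁻¹ : ℝ) : EReal) * elog (f (T + δ))
        ≤ ((T⁻¹ : ℝ) : EReal) * (((T + δ) * b : ℝ) : EReal) :=
          mul_le_mul_of_nonneg_left h1 (by exact_mod_cast inv_nonneg.2 hTpos.le)
      _ = ((T⁻¹ * ((T + δ) * b) : ℝ) : EReal) := (EReal.coe_mul _ _).symm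
      _ ≤ (c : EReal) := by
          apply EReal.coe_le_coe_iff.2
          rw [inv_mul_le_iff₀ hTpos]
          nlinarith

end Aux

/-- For any semiflow `φ` on a compact metric space and any admissible
function `τ`, one has `ĥ_r(φ) ≤ ĥ_s(φ) ≤ h_top^τ(φ)`. -/
theorem stmt9 {X : Type*} [MetricSpace X] [CompactSpace X] (φ : ℝ → X → X)
    (hφ : IsSemiflow φ) (a : Admissible φ) :
    hHatR dist φ Set.univ ≤ hHatS dist φ Set.univ ∧
    hHatS dist φ Set.univ ≤ hTau dist a := by
  constructor
  · refine iSup_le fun δ => iSup_le fun hδ => iSup_le fun ε => iSup_le fun hε => ?_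
    refine le_trans ?_
      (le_iSup_of_le δ (le_iSup_of_le hδ (le_iSup_of_le ε (le_iSup_of_le hε le_rfl))))
    exact rate_le_rate (Filter.Eventually.of_forall fun T => rHat_le_sHat φ hε hδ)
  · refine iSup_le fun δ => iSup_le fun hδ => iSup_le fun ε => iSup_le fun hε => ?_
    set ρ := min δ a.γ / 5 with hρdef
    have hmin : 0 < min δ a.γ := lt_min hδ a.γ_pos
    have hρ : 0 < ρ := by positivity
    have hρδ : 4 * ρ < δ := by
      have h1 : min δ a.γ ≤ δ := min_le_left _ _
      rw [hρdef]; linarith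
    have hργ : 2 * ρ ≤ a.γ := by
      have h1 : min δ a.γ ≤ a.γ := min_le_right _ _
      rw [hρdef]; linarith
    have hρ2 : ρ < a.γ / 2 := by
      have h1 : min δ a.γ ≤ a.γ := min_le_right _ _
      have h2 := a.γ_pos
      rw [hρdef]; linarith
    calc rate (fun T => sHat dist φ Set.univ T ε δ)
        ≤ rate (fun T => sTau dist a (T + δ) ε ρ) :=
          rate_le_rate ((Filter.eventually_ge_atTop (0:ℝ)).mono fun T hT =>
            sHat_le_sTau hφ a hT hε hρ hρδ hργ)
      _ ≤ rate (fun T => sTau dist a T ε ρ) := rate_shift (fun T => sTau dist a T ε ρ) hδ.le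
      _ ≤ hTau dist a :=
          le_iSup_of_le ρ (le_iSup_of_le hρ (le_iSup_of_le hρ2
            (le_iSup_of_le ε (le_iSup_of_le hε le_rfl))))
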